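/- arXiv:2309.13093 — 6 statements merged into one kernel-verified Lean document; each statement's English description precedes it below -/
import Mathlib

section
/- Let α, β, γ, δ > 0 and let x, y : ℝ → ℝ be differentiable functions satisfying x'(t) = αx(t) − βx(t)y(t) and y'(t) = −δy(t) + γx(t)y(t) for all t ∈ ℝ, with x(0) > 0, y(0) > 0 and (x(0), y(0)) ≠ (δ/γ, α/β). Then the solution is periodic: there exists T > 0 such that x(t + T) = x(t) and y(t + T) = y(t) for all t ∈ ℝ. (Every trajectory starting in the open first quadrant, other than the equilibrium p₂ = (δ/γ, α/β), is a closed orbit.) -/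
/-!
In logarithmic coordinates centred at the equilibrium, `p = log (γ x / δ)` and
`q = log (β y / α)`, the system becomes `p' = -F q`, `q' = G p` with `F`, `G` strictly increasing
and vanishing at `0`. Such a system turns the plane counterclockwise: starting off the origin, the solution
crosses the four half-axes in turn, so it meets the positive `q`-axis at two times `a < b`. The
energy `Φ p + Ψ q` (with `Φ' = G`, `Ψ' = F`) is conserved and injective on that half-axis, so the
solution takes the same value at `a` and `b`. Since the Lotka–Volterra vector field is `C¹`,
uniqueness of solutions then makes the solution periodic with period `b - a`.
-/

open Real Set Function

theorem eq_mul_exp_integral_of_deriv_eq_mul {x c : ℝ → ℝ} (hx : Differentiable ℝ x)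
    (hc : Continuous c) (hode : ∀ t, deriv x t = c t * x t) (t : ℝ) :
    x t = x 0 * exp (∫ s in (0 : ℝ)..t, c s) := by
  set I : ℝ → ℝ := fun t => ∫ s in (0 : ℝ)..t, c s
  have hI : ∀ t, HasDerivAt I (c t) t := fun t => (hc.integral_hasStrictDerivAt 0 t).hasDerivAt
  have hw : ∀ t, HasDerivAt (fun t => x t * exp (-I t)) 0 t := fun t => by
    refine ((hx t).hasDerivAt.mul (hI t).neg.exp).congr_deriv ?_
    rw [hode]; ring
  have hconst : x t * exp (-I t) = x 0 * exp (-I 0) :=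
    is_const_of_deriv_eq_zero (fun t => (hw t).differentiableAt) (fun t => (hw t).deriv) t 0
  simp only [I, intervalIntegral.integral_same, neg_zero, exp_zero, mul_one] at hconst
  rw [← hconst, mul_assoc, ← exp_add, neg_add_cancel, exp_zero, mul_one]

theorem pos_of_deriv_eq_mul {x c : ℝ → ℝ} (hx : Differentiable ℝ x) (hc : Continuous c)
    (hode : ∀ t, deriv x t = c t * x t) (h0 : 0 < x 0) (t : ℝ) : 0 < x t := by
  rw [eq_mul_exp_integral_of_deriv_eq_mul hx hc hode t]
  positivity

theorem periodic_of_hasDerivAt_of_eq {E : Type*} [NormedAddCommGroup E] [NormedSpace ℝ E]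
    {v : E → E} (hv : ContDiff ℝ 1 v) {γ : ℝ → E} (hγ : ∀ t, HasDerivAt γ (v (γ t)) t)
    {a b : ℝ} (hab : γ a = γ b) : Periodic γ (b - a) := by
  intro t
  set γ' : ℝ → E := fun s => γ (s + (b - a))
  have hγ' : ∀ s, HasDerivAt γ' (v (γ' s)) s := fun s => (hγ (s + (b - a))).comp_add_const s _
  obtain ⟨A, B, htAB, haAB⟩ : ∃ A B, t ∈ Ioo A B ∧ a ∈ Ioo A B :=
    ⟨min t a - 1, max t a + 1, by constructor <;> constructor <;> grind⟩
  have hcont : Continuous γ := continuous_iff_continuousAt.2 fun t => (hγ t).continuousAt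
  set K := γ' '' Icc A B ∪ γ '' Icc A B
  have hK : IsCompact K := (isCompact_Icc.image (hcont.comp (continuous_add_const _))).union
    (isCompact_Icc.image hcont)
  obtain ⟨L, hL⟩ := hv.locallyLipschitz.locallyLipschitzOn.exists_lipschitzOnWith_of_compact hK
  refine ODE_solution_unique_of_mem_Ioo (v := fun _ => v) (s := fun _ => K) (fun _ _ => hL) haAB
    (fun s hs => ⟨hγ' s, .inl ⟨s, Ioo_subset_Icc_self hs, rfl⟩⟩)
    (fun s hs => ⟨hγ s, .inr ⟨s, Ioo_subset_Icc_self hs, rfl⟩⟩) ?_ htAB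
  simp [γ', hab]

structure IsMonotoneOscillator (F G p q : ℝ → ℝ) : Prop where
  strictMono_F : StrictMono F
  strictMono_G : StrictMono G
  F_zero : F 0 = 0
  G_zero : G 0 = 0
  hasDerivAt_p : ∀ t, HasDerivAt p (-F (q t)) t
  hasDerivAt_q : ∀ t, HasDerivAt q (G (p t)) t

namespace IsMonotoneOscillator

variable {F G p q : ℝ → ℝ} (h : IsMonotoneOscillator F G p q)
include h

theorem F_pos {s : ℝ} (hs : 0 < s) : 0 < F s := h.F_zero ▸ h.strictMono_F hs

theorem G_pos {s : ℝ} (hs : 0 < s) : 0 < G s := h.G_zero ▸ h.strictMono_G hs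

theorem continuous_p : Continuous p :=
  continuous_iff_continuousAt.2 fun t => (h.hasDerivAt_p t).continuousAt

theorem continuous_q : Continuous q :=
  continuous_iff_continuousAt.2 fun t => (h.hasDerivAt_q t).continuousAt

theorem rotate : IsMonotoneOscillator (fun s => -G (-s)) F q (fun t => -p t) where
  strictMono_F _ _ hab := neg_lt_neg (h.strictMono_G (neg_lt_neg hab))
  strictMono_G := h.strictMono_F
  F_zero := by simp [h.G_zero]
  G_zero := h.F_zero
  hasDerivAt_p t := by simpa using h.hasDerivAt_q t
  hasDerivAt_q t := (h.hasDerivAt_p t).neg.congr_deriv (neg_neg _)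

theorem strictMonoOn_q {D : Set ℝ} (hD : Convex ℝ D) (hp : ∀ t ∈ interior D, 0 < p t) :
    StrictMonoOn q D :=
  strictMonoOn_of_deriv_pos hD h.continuous_q.continuousOn fun t ht => by
    rw [(h.hasDerivAt_q t).deriv]
    exact h.G_pos (hp t ht)

theorem exists_ge_p_nonpos {t₀ : ℝ} (hq : 0 ≤ q t₀) : ∃ t ≥ t₀, p t ≤ 0 := by
  by_contra! hpos
  have hmono : StrictMonoOn q (Ici t₀) :=
    h.strictMonoOn_q (convex_Ici t₀) fun t ht => hpos t (interior_subset ht)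
  obtain ⟨t₁, ht₀₁⟩ : ∃ t₁, t₀ < t₁ := ⟨t₀ + 1, lt_add_one t₀⟩
  have hc : 0 < F (q t₁) := h.F_pos (hq.trans_lt (hmono self_mem_Ici ht₀₁.le ht₀₁))
  -- `q` increases while `p > 0`, so `F (q t₁)` bounds the rate of decrease of `p` after `t₁`
  have hdecr : ∀ t ≥ t₁, p t - p t₁ ≤ -F (q t₁) * (t - t₁) := by
    refine fun t ht => (convex_Ici t₁).image_sub_le_mul_sub_of_deriv_le
      h.continuous_p.continuousOn
      (fun s _ => (h.hasDerivAt_p s).differentiableAt.differentiableWithinAt)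
      (fun s hs => ?_) t₁ self_mem_Ici t ht ht
    rw [interior_Ici, mem_Ioi] at hs
    rw [(h.hasDerivAt_p s).deriv, neg_le_neg_iff]
    exact h.strictMono_F.monotone
      (hmono.monotoneOn ht₀₁.le (mem_Ici.2 (ht₀₁.trans hs).le) hs.le)
  have hstep : 0 < p t₁ / F (q t₁) := div_pos (hpos t₁ ht₀₁.le) hc
  have hT := hdecr (t₁ + p t₁ / F (q t₁)) (by linarith)
  rw [add_sub_cancel_left, neg_mul, mul_div_cancel₀ _ hc.ne'] at hT
  linarith [hpos (t₁ + p t₁ / F (q t₁)) (by linarith)]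

theorem exists_gt_p_eq_zero {t₀ : ℝ} (hp : 0 < p t₀) (hq : 0 ≤ q t₀) :
    ∃ t > t₀, p t = 0 ∧ 0 < q t := by
  obtain ⟨t₂, ht₂, hpt₂⟩ := h.exists_ge_p_nonpos hq
  -- `t₁` is the first time after `t₀` at which `p ≤ 0`
  set S := Icc t₀ t₂ ∩ {t | p t ≤ 0}
  have hS : IsCompact S := isCompact_Icc.inter_right (isClosed_le h.continuous_p continuous_const)
  obtain ⟨t₁, ⟨⟨ht₀₁, ht₁₂⟩, hpt₁⟩, hmin⟩ := hS.exists_isLeast ⟨t₂, ⟨ht₂, le_rfl⟩, hpt₂⟩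
  have hlt : t₀ < t₁ := ht₀₁.lt_of_ne (by rintro rfl; exact hpt₁.not_gt hp)
  have hpos : ∀ t ∈ Ioo t₀ t₁, 0 < p t := fun t ht => by
    by_contra! hle
    exact (hmin ⟨⟨ht.1.le, ht.2.le.trans ht₁₂⟩, hle⟩).not_gt ht.2
  obtain ⟨s, hs, hps⟩ := intermediate_value_Icc' ht₀₁ h.continuous_p.continuousOn ⟨hpt₁, hp.le⟩
  have hst₁ : s = t₁ := le_antisymm hs.2 (hmin ⟨⟨hs.1, hs.2.trans ht₁₂⟩, hps.le⟩)
  have hq₁ : q t₀ < q t₁ := h.strictMonoOn_q (convex_Icc t₀ t₁)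
    (fun t ht => hpos t (by rwa [interior_Icc] at ht)) ⟨le_rfl, ht₀₁⟩ ⟨ht₀₁, le_rfl⟩ hlt
  exact ⟨t₁, hlt, hst₁ ▸ hps, hq.trans_lt hq₁⟩

theorem exists_gt_p_eq_zero_of_ne_zero {t₀ : ℝ} (hne : (p t₀, q t₀) ≠ 0) :
    ∃ t > t₀, p t = 0 ∧ 0 < q t := by
  have from₀ : ∀ s, 0 < p s → 0 ≤ q s → ∃ t > s, p t = 0 ∧ 0 < q t :=
    fun s => h.exists_gt_p_eq_zero
  have from₃ : ∀ s, 0 ≤ p s → q s < 0 → ∃ t > s, p t = 0 ∧ 0 < q t := fun s hp hq => by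
    obtain ⟨s', hs', hq', hp'⟩ :=
      h.rotate.rotate.rotate.exists_gt_p_eq_zero (t₀ := s) (neg_pos.2 hq) (by simpa using hp)
    obtain ⟨t, ht, H⟩ := from₀ s' (by simpa using hp') (by linarith)
    exact ⟨t, hs'.trans ht, H⟩
  have from₂ : ∀ s, p s < 0 → q s ≤ 0 → ∃ t > s, p t = 0 ∧ 0 < q t := fun s hp hq => by
    obtain ⟨s', hs', hp', hq'⟩ :=
      h.rotate.rotate.exists_gt_p_eq_zero (t₀ := s) (neg_pos.2 hp) (neg_nonneg.2 hq)
    obtain ⟨t, ht, H⟩ := from₃ s' (by linarith) (neg_pos.1 hq')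
    exact ⟨t, hs'.trans ht, H⟩
  have from₁ : ∀ s, p s ≤ 0 → 0 < q s → ∃ t > s, p t = 0 ∧ 0 < q t := fun s hp hq => by
    obtain ⟨s', hs', hq', hp'⟩ := h.rotate.exists_gt_p_eq_zero (t₀ := s) hq (neg_nonneg.2 hp)
    obtain ⟨t, ht, H⟩ := from₂ s' (neg_pos.1 hp') hq'.le
    exact ⟨t, hs'.trans ht, H⟩
  rcases le_or_gt (p t₀) 0 with hp | hp
  · rcases le_or_gt (q t₀) 0 with hq | hq
    · rcases hp.lt_or_eq with hp | hp
      · exact from₂ t₀ hp hq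
      · exact from₃ t₀ hp.ge (hq.lt_of_ne fun hq => hne (by simp [hp, hq]))
    · exact from₁ t₀ hp hq
  · rcases le_or_gt 0 (q t₀) with hq | hq
    · exact from₀ t₀ hp hq
    · exact from₃ t₀ hp.le hq

theorem energy_eq {Φ Ψ : ℝ → ℝ} (hΦ : ∀ s, HasDerivAt Φ (G s) s) (hΨ : ∀ s, HasDerivAt Ψ (F s) s)
    (s t : ℝ) : Φ (p s) + Ψ (q s) = Φ (p t) + Ψ (q t) := by
  have hE : ∀ t, HasDerivAt (fun t => Φ (p t) + Ψ (q t)) 0 t := fun t =>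
    (((hΦ (p t)).comp t (h.hasDerivAt_p t)).add ((hΨ (q t)).comp t (h.hasDerivAt_q t))).congr_deriv
      (by ring)
  exact is_const_of_deriv_eq_zero (fun t => (hE t).differentiableAt) (fun t => (hE t).deriv) s t

theorem exists_lt_eq_of_ne_zero {Φ Ψ : ℝ → ℝ} (hΦ : ∀ s, HasDerivAt Φ (G s) s)
    (hΨ : ∀ s, HasDerivAt Ψ (F s) s) {t₀ : ℝ} (hne : (p t₀, q t₀) ≠ 0) :
    ∃ a b, a < b ∧ p a = p b ∧ q a = q b := by
  obtain ⟨a, -, hpa, hqa⟩ := h.exists_gt_p_eq_zero_of_ne_zero hne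
  obtain ⟨b, hab, hpb, hqb⟩ := h.exists_gt_p_eq_zero_of_ne_zero (t₀ := a) (by simp [hqa.ne'])
  have hΨ_mono : StrictMonoOn Ψ (Ici 0) :=
    strictMonoOn_of_deriv_pos (convex_Ici 0) (fun s _ => (hΨ s).continuousAt.continuousWithinAt)
      fun s hs => by
        rw [(hΨ s).deriv]
        exact h.F_pos (by simpa using hs)
  have hE := h.energy_eq hΦ hΨ a b
  rw [hpa, hpb, add_right_inj] at hE
  exact ⟨a, b, hab, hpa.trans hpb.symm, hΨ_mono.injOn hqa.le hqb.le hE⟩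

end IsMonotoneOscillator

theorem hasDerivAt_mul_exp_sub_self_sub_one (c s : ℝ) :
    HasDerivAt (fun s => c * (exp s - s - 1)) (c * (exp s - 1)) s := by
  simpa using (((hasDerivAt_exp s).sub (hasDerivAt_id s)).sub_const 1).const_mul c

theorem isMonotoneOscillator_log_lotkaVolterra {α β γ δ : ℝ} (hα : 0 < α) (hβ : 0 < β)
    (hγ : 0 < γ) (hδ : 0 < δ) {x y : ℝ → ℝ}
    (hx : ∀ t, HasDerivAt x (α * x t - β * x t * y t) t)
    (hy : ∀ t, HasDerivAt y (-δ * y t + γ * x t * y t) t)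
    (hxpos : ∀ t, 0 < x t) (hypos : ∀ t, 0 < y t) :
    IsMonotoneOscillator (fun s => α * (exp s - 1)) (fun s => δ * (exp s - 1))
      (fun t => log (x t) - log (δ / γ)) (fun t => log (y t) - log (α / β)) where
  strictMono_F _ _ hab := by simp only; gcongr
  strictMono_G _ _ hab := by simp only; gcongr
  F_zero := by simp
  G_zero := by simp
  hasDerivAt_p t := by
    refine (((hx t).log (hxpos t).ne').sub_const (log (δ / γ))).congr_deriv ?_
    have := (hxpos t).ne'
    rw [exp_sub, exp_log (hypos t), exp_log (by positivity)]
    field_simp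
    ring
  hasDerivAt_q t := by
    refine (((hy t).log (hypos t).ne').sub_const (log (α / β))).congr_deriv ?_
    have := (hypos t).ne'
    rw [exp_sub, exp_log (hxpos t), exp_log (by positivity)]
    field_simp
    ring

/-- Every Lotka–Volterra trajectory starting in the open first quadrant, other
than the coexistence equilibrium `(δ/γ, α/β)`, is periodic (a closed orbit). -/
theorem lotka_volterra_orbits_closed
    (α β γ δ : ℝ) (hα : 0 < α) (hβ : 0 < β) (hγ : 0 < γ) (hδ : 0 < δ)
    (x y : ℝ → ℝ) (hx : Differentiable ℝ x) (hy : Differentiable ℝ y)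
    (hxode : ∀ t, deriv x t = α * x t - β * x t * y t)
    (hyode : ∀ t, deriv y t = -δ * y t + γ * x t * y t)
    (hx0 : 0 < x 0) (hy0 : 0 < y 0)
    (hne : (x 0, y 0) ≠ (δ / γ, α / β)) :
    ∃ T > (0 : ℝ), ∀ t, x (t + T) = x t ∧ y (t + T) = y t := by
  have hxd : ∀ t, HasDerivAt x (α * x t - β * x t * y t) t := fun t => hxode t ▸ (hx t).hasDerivAt
  have hyd : ∀ t, HasDerivAt y (-δ * y t + γ * x t * y t) t := fun t => hyode t ▸ (hy t).hasDerivAt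
  have hxpos := pos_of_deriv_eq_mul hx (c := fun t => α - β * y t)
    (continuous_const.sub (continuous_const.mul hy.continuous))
    (fun t => by rw [hxode]; ring) hx0
  have hypos := pos_of_deriv_eq_mul hy (c := fun t => -δ + γ * x t)
    (continuous_const.add (continuous_const.mul hx.continuous))
    (fun t => by rw [hyode]; ring) hy0
  have hosc := isMonotoneOscillator_log_lotkaVolterra hα hβ hγ hδ hxd hyd hxpos hypos
  obtain ⟨a, b, hab, hpab, hqab⟩ := hosc.exists_lt_eq_of_ne_zero
    (hasDerivAt_mul_exp_sub_self_sub_one δ) (hasDerivAt_mul_exp_sub_self_sub_one α) (t₀ := 0) <| by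
      contrapose! hne
      simp only [Prod.mk_eq_zero, sub_eq_zero] at hne
      exact Prod.ext (log_injOn_pos hx0 (div_pos hδ hγ) hne.1)
        (log_injOn_pos hy0 (div_pos hα hβ) hne.2)
  have hper := periodic_of_hasDerivAt_of_eq
    (v := fun z : ℝ × ℝ => (α * z.1 - β * z.1 * z.2, -δ * z.2 + γ * z.1 * z.2)) (by fun_prop)
    (fun t => (hxd t).prodMk (hyd t))
    (Prod.ext (log_injOn_pos (hxpos a) (hxpos b) (sub_left_inj.1 hpab))
      (log_injOn_pos (hypos a) (hypos b) (sub_left_inj.1 hqab)))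
  exact ⟨b - a, sub_pos.2 hab, fun t => Prod.ext_iff.1 (hper t)⟩
end

section
/- Let α, β, γ, δ > 0 and h > 0. The Jacobian of the Euler map at the fixed point (δ/γ, α/β) is the matrix [[1, −βδh/γ], [αγh/β, 1]], whose eigenvalues over ℂ are the complex conjugates λ = 1 ± i·h·√(αδ), and each eigenvalue has modulus √(1 + αδh²) > 1. Hence the fixed point (δ/γ, α/β) is an unstable focus of the Euler system for every step size h > 0. -/
/-!
The Jacobian of the Euler map at `(δ/γ, α/β)` has trace `2` and determinant `1 + αδh²`, so its
characteristic polynomial `(z - 1)² + αδh²` has the conjugate roots `1 ± i·h·√(αδ)`, of squared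
modulus `1 + αδh² > 1`.
-/

open Polynomial

def lotkaVolterraEuler (α β γ δ h : ℝ) (p : Fin 2 → ℝ) : Fin 2 → ℝ :=
  ![p 0 + h * (α * p 0 - β * p 0 * p 1), p 1 + h * (γ * p 0 * p 1 - δ * p 1)]

def lotkaVolterraEulerJacobian (α β γ δ h : ℝ) (p : Fin 2 → ℝ) : Matrix (Fin 2) (Fin 2) ℝ :=
  !![1 + h * (α - β * p 1), -(h * β * p 0); h * γ * p 1, 1 + h * (γ * p 0 - δ)]

theorem hasFDerivAt_lotkaVolterraEuler (α β γ δ h : ℝ) (p : Fin 2 → ℝ) :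
    HasFDerivAt (lotkaVolterraEuler α β γ δ h)
      (Matrix.toLin' (lotkaVolterraEulerJacobian α β γ δ h p)).toContinuousLinearMap p := by
  have hx : HasFDerivAt (fun q : Fin 2 → ℝ => q 0) (ContinuousLinearMap.proj (R := ℝ) 0) p :=
    hasFDerivAt_apply 0 p
  have hy : HasFDerivAt (fun q : Fin 2 → ℝ => q 1) (ContinuousLinearMap.proj (R := ℝ) 1) p :=
    hasFDerivAt_apply 1 p
  rw [hasFDerivAt_pi']
  intro i
  fin_cases i
  · refine (hx.add (((hx.const_mul α).sub ((hx.const_mul β).mul hy)).const_mul h)).congr_fderiv ?_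
    ext v
    simp [lotkaVolterraEulerJacobian, dotProduct, Fin.sum_univ_two]
    ring
  · refine (hy.add ((((hx.const_mul γ).mul hy).sub (hy.const_mul δ)).const_mul h)).congr_fderiv ?_
    ext v
    simp [lotkaVolterraEulerJacobian, dotProduct, Fin.sum_univ_two]
    ring

theorem lotkaVolterraEulerJacobian_coexistence {α β γ δ : ℝ} (h : ℝ) (hβ : β ≠ 0) (hγ : γ ≠ 0) :
    lotkaVolterraEulerJacobian α β γ δ h ![δ / γ, α / β]
      = !![1, -(β * δ * h) / γ; (α * γ * h) / β, 1] := by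
  ext i j
  fin_cases i <;> fin_cases j <;>
    simp [lotkaVolterraEulerJacobian, mul_div_cancel₀ _ hβ, mul_div_cancel₀ _ hγ] <;> ring

theorem Matrix.isRoot_charpoly_map_ofReal_iff {a t : ℝ} (M : Matrix (Fin 2) (Fin 2) ℝ)
    (htr : M.trace = 2 * a) (hdet : M.det = a ^ 2 + t ^ 2) (z : ℂ) :
    (M.map Complex.ofReal).charpoly.IsRoot z ↔ z = a + Complex.I * t ∨ z = a - Complex.I * t := by
  have hfac : z ^ 2 - (2 * a : ℝ) * z + (a ^ 2 + t ^ 2 : ℝ)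
      = (z - (a + Complex.I * t)) * (z - (a - Complex.I * t)) := by
    push_cast
    linear_combination (t : ℂ) ^ 2 * Complex.I_sq
  rw [show M.map Complex.ofReal = M.map Complex.ofRealHom from rfl, charpoly_map,
    charpoly_fin_two, htr, hdet]
  simp only [IsRoot.def, Polynomial.map_add, Polynomial.map_sub, Polynomial.map_mul,
    Polynomial.map_pow, map_X, map_C, eval_add, eval_sub, eval_mul, eval_pow, eval_X, eval_C,
    Complex.ofRealHom_eq_coe, hfac, mul_eq_zero, sub_eq_zero]

theorem Complex.norm_add_I_mul (x y : ℝ) : ‖(x : ℂ) + I * y‖ = √(x ^ 2 + y ^ 2) := by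
  rw [mul_comm, norm_add_mul_I]

theorem Complex.norm_sub_I_mul (x y : ℝ) : ‖(x : ℂ) - I * y‖ = √(x ^ 2 + y ^ 2) := by
  rw [mul_comm, sub_eq_add_neg, ← neg_mul, ← ofReal_neg, norm_add_mul_I, neg_sq]

/-- The Jacobian of the Euler map at the fixed point `(δ/γ, α/β)` is the matrix
`[[1, −βδh/γ], [αγh/β, 1]]`, whose eigenvalues over `ℂ` are the complex
conjugates `1 ± i·h·√(αδ)`, each of modulus `√(1 + αδh²) > 1`: the coexistence
fixed point is an unstable focus for every step size `h > 0`. -/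
theorem euler_coexistence_unstable_focus
    (α β γ δ h : ℝ) (hα : 0 < α) (hβ : 0 < β) (hγ : 0 < γ) (hδ : 0 < δ)
    (hh : 0 < h) :
    (fderiv ℝ
        (fun p : Fin 2 → ℝ =>
          ![p 0 + h * (α * p 0 - β * p 0 * p 1),
            p 1 + h * (γ * p 0 * p 1 - δ * p 1)])
        ![δ / γ, α / β]).toLinearMap
      = Matrix.toLin' (!![1, -(β * δ * h) / γ; (α * γ * h) / β, 1]) ∧
    (∀ z : ℂ,
      (Matrix.charpoly ((!![1, -(β * δ * h) / γ; (α * γ * h) / β, 1] :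
          Matrix (Fin 2) (Fin 2) ℝ).map (Complex.ofReal))).IsRoot z ↔
        z = 1 + Complex.I * h * Real.sqrt (α * δ) ∨
        z = 1 - Complex.I * h * Real.sqrt (α * δ)) ∧
    ‖(1 + Complex.I * h * Real.sqrt (α * δ) : ℂ)‖ = Real.sqrt (1 + α * δ * h ^ 2) ∧
    ‖(1 - Complex.I * h * Real.sqrt (α * δ) : ℂ)‖ = Real.sqrt (1 + α * δ * h ^ 2) ∧
    1 < Real.sqrt (1 + α * δ * h ^ 2) := by
  set t := h * √(α * δ)
  have ht : (1 : ℝ) ^ 2 + t ^ 2 = 1 + α * δ * h ^ 2 := by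
    rw [mul_pow, Real.sq_sqrt (by positivity)]
    ring
  have hplus : (1 + Complex.I * h * √(α * δ) : ℂ) = (1 : ℝ) + Complex.I * t := by
    push_cast [t]
    ring
  have hminus : (1 - Complex.I * h * √(α * δ) : ℂ) = (1 : ℝ) - Complex.I * t := by
    push_cast [t]
    ring
  have hdet : (!![1, -(β * δ * h) / γ; (α * γ * h) / β, 1] : Matrix (Fin 2) (Fin 2) ℝ).det
      = 1 ^ 2 + t ^ 2 := by
    rw [ht, Matrix.det_fin_two_of]
    field_simp
    ring
  refine ⟨?_, fun z => ?_, ?_, ?_, ?_⟩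
  · change (fderiv ℝ (lotkaVolterraEuler α β γ δ h) _).toLinearMap = _
    rw [(hasFDerivAt_lotkaVolterraEuler α β γ δ h _).fderiv,
      lotkaVolterraEulerJacobian_coexistence h hβ.ne' hγ.ne']
    rfl
  · rw [hplus, hminus]
    exact Matrix.isRoot_charpoly_map_ofReal_iff _ (by simp [Matrix.trace_fin_two]; ring) hdet z
  · rw [hplus, Complex.norm_add_I_mul, ht]
  · rw [hminus, Complex.norm_sub_I_mul, ht]
  · rw [Real.lt_sqrt zero_le_one]
    nlinarith [mul_pos (mul_pos hα hδ) (pow_pos hh 2)]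
end

section
/- Let α, β, γ, δ > 0 and φ > 0. A point (x, y) ∈ ℝ² with x ≥ 0 and y ≥ 0 is a fixed point of the Mickens map if and only if (x, y) = (0, 0) or (x, y) = (δ/γ, α/β); i.e., the Mickens discretization has exactly the same fixed points as the continuous Lotka–Volterra system. -/
/-!
The Mickens map has the form `(x, y) ↦ (x · P(y), y · Q(x, y))` with explicit rational rates
`P` and `Q`, so a fixed point has `x = 0` or `P(y) = 1`, and `y = 0` or `Q(x, y) = 1`.
The prey rate equals `1` exactly on the line `y = α/β`; there the common factor `2αφ + 1`
cancels from `Q(x, α/β)`, which then equals `1` exactly at `x = δ/γ`; and `Q(0, y) = 1` would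
force `δφ = 0`.
-/

lemma div_eq_one_iff_eq_and_ne_zero {G₀ : Type*} [GroupWithZero G₀] {a b : G₀} :
    a / b = 1 ↔ a = b ∧ b ≠ 0 := by
  refine ⟨fun h => ?_, fun ⟨hab, hb⟩ => (div_eq_one_iff_eq hb).2 hab⟩
  have hb : b ≠ 0 := by
    rintro rfl
    simp at h
  exact ⟨(div_eq_one_iff_eq hb).1 h, hb⟩

noncomputable def mickensPreyRate (α β φ y : ℝ) : ℝ :=
  (2 * α * φ + 1) / (1 + α * φ + β * φ * y)

noncomputable def mickensPredatorRate (α β γ δ φ x y : ℝ) : ℝ :=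
  (2 * γ * φ * x * (2 * α * φ + 1) + (1 + α * φ + β * φ * y)) /
    ((1 + δ * φ) * (1 + α * φ + β * φ * y) + γ * φ * x * (2 * α * φ + 1))

section Rates

variable {α β γ δ φ x y : ℝ}

lemma mickens_map_eq_mul_rates :
    (x * (2 * α * φ + 1) / (1 + α * φ + β * φ * y),
      (2 * γ * φ * x * y * (2 * α * φ + 1) + y * (1 + α * φ + β * φ * y)) /
        ((1 + δ * φ) * (1 + α * φ + β * φ * y) + γ * φ * x * (2 * α * φ + 1)))
      = (x * mickensPreyRate α β φ y, y * mickensPredatorRate α β γ δ φ x y) := by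
  simp only [mickensPreyRate, mickensPredatorRate, Prod.mk.injEq]
  constructor <;> ring

lemma mickensPreyRate_eq_one_iff (hα : 0 < α) (hβ : β ≠ 0) (hφ : 0 < φ) :
    mickensPreyRate α β φ y = 1 ↔ y = α / β := by
  rw [mickensPreyRate, div_eq_one_iff_eq_and_ne_zero]
  constructor
  · rintro ⟨h, -⟩
    have hβy : β * y = α := mul_right_cancel₀ hφ.ne' (by linear_combination -h)
    rw [← hβy, mul_div_cancel_left₀ y hβ]
  · rintro rfl
    constructor
    · field_simp
      ring
    · field_simp
      positivity

lemma mickensPredatorRate_zero_ne_one (hδ : δ ≠ 0) (hφ : φ ≠ 0) :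
    mickensPredatorRate α β γ δ φ 0 y ≠ 1 := by
  rw [mickensPredatorRate, Ne, div_eq_one_iff_eq_and_ne_zero]
  rintro ⟨h, hE⟩
  have hD : 1 + α * φ + β * φ * y = 0 := by
    simpa [hδ, hφ] using (show δ * φ * (1 + α * φ + β * φ * y) = 0 by linear_combination -h)
  simp [hD] at hE

lemma mickensPredatorRate_prey_equilibrium_eq_one_iff (hα : 0 < α) (hβ : β ≠ 0) (hγ : γ ≠ 0)
    (hδ : 0 < δ) (hφ : 0 < φ) :
    mickensPredatorRate α β γ δ φ x (α / β) = 1 ↔ x = δ / γ := by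
  have hA : 2 * α * φ + 1 ≠ 0 := by positivity
  have hD : 1 + α * φ + β * φ * (α / β) = 2 * α * φ + 1 := by
    field_simp
    ring
  rw [mickensPredatorRate, hD, div_eq_one_iff_eq_and_ne_zero]
  constructor
  · rintro ⟨h, -⟩
    have hγx : φ * (γ * x) = φ * δ :=
      mul_left_cancel₀ hA (by linear_combination h)
    rw [← mul_left_cancel₀ hφ.ne' hγx, mul_div_cancel_left₀ x hγ]
  · rintro rfl
    constructor
    · field_simp
      ring
    · field_simp
      positivity

end Rates

theorem mickens_fixed_points_general
    (α β γ δ φ : ℝ) (hα : 0 < α) (hβ : 0 < β) (hγ : 0 < γ) (hδ : 0 < δ)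
    (hφ : 0 < φ) (x y : ℝ) :
    (x * (2 * α * φ + 1) / (1 + α * φ + β * φ * y),
      (2 * γ * φ * x * y * (2 * α * φ + 1) + y * (1 + α * φ + β * φ * y)) /
        ((1 + δ * φ) * (1 + α * φ + β * φ * y) + γ * φ * x * (2 * α * φ + 1)))
      = (x, y) ↔
      ((x, y) = ((0 : ℝ), (0 : ℝ)) ∨ (x, y) = (δ / γ, α / β)) := by
  have hpredator := mickensPredatorRate_prey_equilibrium_eq_one_iff (x := x) hα hβ.ne' hγ.ne' hδ hφ
  have hprey_ne_zero : α / β ≠ 0 := by positivity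
  simp only [mickens_map_eq_mul_rates, Prod.mk.injEq, mul_right_eq_self₀,
    mickensPreyRate_eq_one_iff hα hβ.ne' hφ]
  constructor
  · rintro ⟨rfl | rfl, hrate | hy⟩
    · exact Or.inr ⟨hpredator.1 hrate, rfl⟩
    · exact absurd hy hprey_ne_zero
    · exact absurd hrate (mickensPredatorRate_zero_ne_one hδ.ne' hφ.ne')
    · exact Or.inl ⟨rfl, hy⟩
  · rintro (⟨rfl, rfl⟩ | ⟨rfl, rfl⟩)
    · exact ⟨Or.inr rfl, Or.inr rfl⟩
    · exact ⟨Or.inl rfl, Or.inl (hpredator.2 rfl)⟩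

/-- The fixed points of the Mickens discretization in the first quadrant are
exactly the equilibria of the continuous Lotka–Volterra system:
`(0, 0)` and `(δ/γ, α/β)`. -/
theorem mickens_fixed_points
    (α β γ δ φ : ℝ) (hα : 0 < α) (hβ : 0 < β) (hγ : 0 < γ) (hδ : 0 < δ)
    (hφ : 0 < φ) (x y : ℝ) (hx : 0 ≤ x) (hy : 0 ≤ y) :
    (x * (2 * α * φ + 1) / (1 + α * φ + β * φ * y),
      (2 * γ * φ * x * y * (2 * α * φ + 1) + y * (1 + α * φ + β * φ * y)) /
        ((1 + δ * φ) * (1 + α * φ + β * φ * y) + γ * φ * x * (2 * α * φ + 1)))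
      = (x, y) ↔
      ((x, y) = ((0 : ℝ), (0 : ℝ)) ∨ (x, y) = (δ / γ, α / β)) :=
  mickens_fixed_points_general α β γ δ φ hα hβ hγ hδ hφ x y
end

section
/- Let α, β, γ, δ > 0 and φ > 0. The Jacobian of the Mickens map at the fixed point (0,0) is the diagonal matrix diag((2αφ + 1)/(αφ + 1), 1/(δφ + 1)), whose eigenvalues are λ₁ = 1/(δφ + 1) and λ₂ = (2αφ + 1)/(αφ + 1), and they satisfy 0 < λ₁ < 1 and λ₂ > 1. Hence (0,0) is a saddle point of the Mickens discretization, for every φ > 0. -/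
/-!
Each coordinate of the Mickens map is divisible by the corresponding coordinate of its
argument: it has the form `p i * u i p` with `u i` differentiable at the origin. Since
`p i` vanishes there, the product rule makes the Jacobian at the origin `diag (u i 0)`,
which here is `diag ((2αφ+1)/(αφ+1), 1/(δφ+1))`.
-/

open Matrix

section CoordMul

variable {𝕜 ι : Type*} [NontriviallyNormedField 𝕜] [Fintype ι]

theorem hasFDerivAt_apply_mul_of_apply_eq_zero {u : (ι → 𝕜) → 𝕜} {x : ι → 𝕜} (i : ι)
    (hu : DifferentiableAt 𝕜 u x) (hx : x i = 0) :
    HasFDerivAt (fun p => p i * u p)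
      (u x • ContinuousLinearMap.proj (R := 𝕜) (φ := fun _ : ι => 𝕜) i) x :=
  ((hasFDerivAt_apply i x).mul hu.hasFDerivAt).congr_fderiv (by ext; simp [hx])

variable {u : ι → (ι → 𝕜) → 𝕜}

theorem hasFDerivAt_coord_mul_zero (hu : ∀ i, DifferentiableAt 𝕜 (u i) 0) :
    HasFDerivAt (fun p i => p i * u i p)
      (ContinuousLinearMap.pi fun i =>
        u i 0 • ContinuousLinearMap.proj (R := 𝕜) (φ := fun _ : ι => 𝕜) i) 0 :=
  hasFDerivAt_pi'.2 fun i => hasFDerivAt_apply_mul_of_apply_eq_zero i (hu i) rfl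

theorem fderiv_coord_mul_zero [DecidableEq ι] (hu : ∀ i, DifferentiableAt 𝕜 (u i) 0) :
    (fderiv 𝕜 (fun p i => p i * u i p) 0).toLinearMap = toLin' (diagonal fun i => u i 0) := by
  rw [(hasFDerivAt_coord_mul_zero hu).fderiv]
  ext v i
  simp [mulVec_diagonal, mul_comm]

end CoordMul

theorem mickens_origin_saddle_general
    (α β γ δ φ : ℝ) (hα : 0 < α) (hδ : 0 < δ)
    (hφ : 0 < φ) :
    (fderiv ℝ
        (fun p : Fin 2 → ℝ =>
          ![p 0 * (2 * α * φ + 1) / (1 + α * φ + β * φ * p 1),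
            (2 * γ * φ * p 0 * p 1 * (2 * α * φ + 1) +
                p 1 * (1 + α * φ + β * φ * p 1)) /
              ((1 + δ * φ) * (1 + α * φ + β * φ * p 1) +
                γ * φ * p 0 * (2 * α * φ + 1))])
        ![0, 0]).toLinearMap
      = Matrix.toLin'
          (Matrix.diagonal ![(2 * α * φ + 1) / (α * φ + 1), 1 / (δ * φ + 1)]) ∧
    0 < 1 / (δ * φ + 1) ∧ 1 / (δ * φ + 1) < 1 ∧
    1 < (2 * α * φ + 1) / (α * φ + 1) := by
  have hαφ : 0 < α * φ := mul_pos hα hφ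
  have hδφ : 0 < δ * φ := mul_pos hδ hφ
  set u : Fin 2 → (Fin 2 → ℝ) → ℝ :=
    ![fun p => (2 * α * φ + 1) / (1 + α * φ + β * φ * p 1),
      fun p => (2 * γ * φ * p 0 * (2 * α * φ + 1) + (1 + α * φ + β * φ * p 1)) /
        ((1 + δ * φ) * (1 + α * φ + β * φ * p 1) + γ * φ * p 0 * (2 * α * φ + 1))]
  have hfactor : (fun p : Fin 2 → ℝ =>
          ![p 0 * (2 * α * φ + 1) / (1 + α * φ + β * φ * p 1),
            (2 * γ * φ * p 0 * p 1 * (2 * α * φ + 1) +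
                p 1 * (1 + α * φ + β * φ * p 1)) /
              ((1 + δ * φ) * (1 + α * φ + β * φ * p 1) +
                γ * φ * p 0 * (2 * α * φ + 1))]) = fun p i => p i * u i p := by
    funext p i
    fin_cases i <;> simp [u] <;> ring
  have hu : ∀ i, DifferentiableAt ℝ (u i) 0 := by
    refine Fin.forall_fin_two.2 ⟨?_, ?_⟩ <;>
      simp only [u, cons_val_zero, cons_val_one] <;>
      fun_prop (disch := simp only [Pi.zero_apply, mul_zero, add_zero]; positivity)
  have hu0 : (fun i => u i 0) = ![(2 * α * φ + 1) / (α * φ + 1), 1 / (δ * φ + 1)] := by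
    funext i
    fin_cases i <;> simp [u] <;> field_simp <;> ring
  refine ⟨?_, by positivity, ?_, ?_⟩
  · rw [hfactor, show (![0, 0] : Fin 2 → ℝ) = 0 from by simp, fderiv_coord_mul_zero hu, hu0]
  · rw [div_lt_one (by positivity)]; linarith
  · rw [lt_div_iff₀ (by positivity)]; linarith

/-- The Jacobian of the Mickens map at the fixed point `(0,0)` is the diagonal
matrix `diag((2αφ+1)/(αφ+1), 1/(δφ+1))`; its eigenvalues satisfy
`0 < λ₁ = 1/(δφ+1) < 1` and `λ₂ = (2αφ+1)/(αφ+1) > 1`, so `(0,0)` is a saddle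
point of the Mickens discretization for every `φ > 0`. -/
theorem mickens_origin_saddle
    (α β γ δ φ : ℝ) (hα : 0 < α) (hβ : 0 < β) (hγ : 0 < γ) (hδ : 0 < δ)
    (hφ : 0 < φ) :
    (fderiv ℝ
        (fun p : Fin 2 → ℝ =>
          ![p 0 * (2 * α * φ + 1) / (1 + α * φ + β * φ * p 1),
            (2 * γ * φ * p 0 * p 1 * (2 * α * φ + 1) +
                p 1 * (1 + α * φ + β * φ * p 1)) /
              ((1 + δ * φ) * (1 + α * φ + β * φ * p 1) +
                γ * φ * p 0 * (2 * α * φ + 1))])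
        ![0, 0]).toLinearMap
      = Matrix.toLin'
          (Matrix.diagonal ![(2 * α * φ + 1) / (α * φ + 1), 1 / (δ * φ + 1)]) ∧
    0 < 1 / (δ * φ + 1) ∧ 1 / (δ * φ + 1) < 1 ∧
    1 < (2 * α * φ + 1) / (α * φ + 1) :=
  mickens_origin_saddle_general α β γ δ φ hα hδ hφ
end

section
/- Let α, β, γ, δ > 0 and φ > 0, and let M be the 2×2 real matrix [[1, −βδφ/((2αφ + 1)γ)], [αγφ/(β(2δφ + 1)), (3αδφ² + 2(α + δ)φ + 1)/(4αδφ² + 2(α + δ)φ + 1)]] (the Jacobian of the Mickens map at the fixed point (δ/γ, α/β)). Then det M = 1 and (trace M)² < 4, so the eigenvalues of M over ℂ are non-real complex conjugates, each of modulus exactly 1. Hence (δ/γ, α/β) is a center of the linearized Mickens system. -/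
/-!
At the coexistence point the Jacobian `M` of the Mickens map has determinant exactly `1`,
while its trace is `2 - αδφ² / (4αδφ² + 2(α + δ)φ + 1)`, which lies strictly between `-2` and `2`.
The eigenvalues are then the roots of `z² - (tr M) z + 1`, whose discriminant `(tr M)² - 4` is
negative; so they are non-real, and their real part `tr M / 2` forces `|z|² = 1`.
-/

lemma Complex.im_ne_zero_and_norm_eq_one_of_sq_sub_mul_add_one_eq_zero {t : ℝ} (ht : t ^ 2 < 4)
    {z : ℂ} (hz : z ^ 2 - t * z + 1 = 0) : z.im ≠ 0 ∧ ‖z‖ = 1 := by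
  have hre : z.re ^ 2 - z.im ^ 2 - t * z.re + 1 = 0 := by
    simpa [sq] using congrArg Complex.re hz
  have him : z.im * (2 * z.re - t) = 0 := by
    have := congrArg Complex.im hz
    simp only [sq, Complex.sub_im, Complex.mul_im, Complex.ofReal_re, Complex.ofReal_im,
      Complex.add_im, Complex.one_im, Complex.zero_im] at this
    linarith
  have hz_im : z.im ≠ 0 := by
    intro h0
    nlinarith [sq_nonneg (2 * z.re - t)]
  have hz_re : 2 * z.re = t := by linarith [(mul_eq_zero.mp him).resolve_left hz_im]
  refine ⟨hz_im, ?_⟩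
  subst hz_re
  rw [Complex.norm_def, Real.sqrt_eq_one, Complex.normSq_apply]
  linear_combination -hre

lemma Matrix.im_ne_zero_and_norm_eq_one_of_charpoly_isRoot {M : Matrix (Fin 2) (Fin 2) ℝ}
    (hdet : M.det = 1) (htr : M.trace ^ 2 < 4) {z : ℂ}
    (hz : (M.map Complex.ofReal).charpoly.IsRoot z) : z.im ≠ 0 ∧ ‖z‖ = 1 := by
  rw [show M.map Complex.ofReal = M.map Complex.ofRealHom from rfl, Matrix.charpoly_map,
    Matrix.charpoly_fin_two, hdet] at hz
  refine Complex.im_ne_zero_and_norm_eq_one_of_sq_sub_mul_add_one_eq_zero htr ?_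
  simpa using hz

/-- The Jacobian of the Mickens map at the coexistence fixed point `(δ/γ, α/β)`. -/
noncomputable def mickensJacobian (α β γ δ φ : ℝ) : Matrix (Fin 2) (Fin 2) ℝ :=
  !![1, -(β * δ * φ) / ((2 * α * φ + 1) * γ);
     α * γ * φ / (β * (2 * δ * φ + 1)),
     (3 * α * δ * φ ^ 2 + 2 * (α + δ) * φ + 1) / (4 * α * δ * φ ^ 2 + 2 * (α + δ) * φ + 1)]

section MickensJacobian

variable {α β γ δ φ : ℝ}

lemma mickensJacobian_det (hα : 0 < α) (hβ : 0 < β) (hγ : 0 < γ) (hδ : 0 < δ) (hφ : 0 < φ) :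
    (mickensJacobian α β γ δ φ).det = 1 := by
  have hD : 4 * α * δ * φ ^ 2 + 2 * (α + δ) * φ + 1 ≠ 0 := by positivity
  rw [mickensJacobian, Matrix.det_fin_two_of]
  field_simp
  ring

lemma mickensJacobian_trace (hD : 4 * α * δ * φ ^ 2 + 2 * (α + δ) * φ + 1 ≠ 0) :
    (mickensJacobian α β γ δ φ).trace =
      2 - α * δ * φ ^ 2 / (4 * α * δ * φ ^ 2 + 2 * (α + δ) * φ + 1) := by
  have hN : 3 * α * δ * φ ^ 2 + 2 * (α + δ) * φ + 1 =
      (4 * α * δ * φ ^ 2 + 2 * (α + δ) * φ + 1) - α * δ * φ ^ 2 := by ring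
  rw [mickensJacobian, Matrix.trace_fin_two_of, hN, sub_div, div_self hD]
  ring

lemma mickensJacobian_trace_sq_lt_four (hα : 0 < α) (hδ : 0 < δ) (hφ : 0 < φ) :
    (mickensJacobian α β γ δ φ).trace ^ 2 < 4 := by
  have hD : 0 < 4 * α * δ * φ ^ 2 + 2 * (α + δ) * φ + 1 := by positivity
  have hq_pos : 0 < α * δ * φ ^ 2 / (4 * α * δ * φ ^ 2 + 2 * (α + δ) * φ + 1) := by positivity
  have hq_lt : α * δ * φ ^ 2 / (4 * α * δ * φ ^ 2 + 2 * (α + δ) * φ + 1) < 4 := by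
    rw [div_lt_iff₀ hD]
    nlinarith [mul_pos hα hφ, mul_pos hδ hφ]
  rw [mickensJacobian_trace hD.ne']
  nlinarith

end MickensJacobian

/-- The Jacobian of the Mickens map at the coexistence fixed point `(δ/γ, α/β)`
has determinant `1` and squared trace less than `4`; hence its eigenvalues over
`ℂ` are non-real complex conjugates of modulus exactly `1`, and `(δ/γ, α/β)` is
a center of the linearized Mickens system. -/
theorem mickens_coexistence_center
    (α β γ δ φ : ℝ) (hα : 0 < α) (hβ : 0 < β) (hγ : 0 < γ) (hδ : 0 < δ)
    (hφ : 0 < φ) :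
    let M : Matrix (Fin 2) (Fin 2) ℝ :=
      !![1, -(β * δ * φ) / ((2 * α * φ + 1) * γ);
         α * γ * φ / (β * (2 * δ * φ + 1)),
         (3 * α * δ * φ ^ 2 + 2 * (α + δ) * φ + 1) /
           (4 * α * δ * φ ^ 2 + 2 * (α + δ) * φ + 1)]
    M.det = 1 ∧ (M.trace) ^ 2 < 4 ∧
      ∀ z : ℂ, (Matrix.charpoly (M.map (Complex.ofReal))).IsRoot z →
        z.im ≠ 0 ∧ ‖z‖ = 1 := by
  intro M
  have hdet : M.det = 1 := mickensJacobian_det hα hβ hγ hδ hφ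
  have htr : M.trace ^ 2 < 4 := mickensJacobian_trace_sq_lt_four hα hδ hφ
  exact ⟨hdet, htr, fun _ hz => Matrix.im_ne_zero_and_norm_eq_one_of_charpoly_isRoot hdet htr hz⟩
end

section
/- Let α, β, γ, δ > 0 and φ > 0, and consider the Mickens update x_{i+1} = x_i(2αφ + 1)/(1 + αφ + βφy_i) with x_i > 0 and y_i ≥ 0. If y_i > α/β then x_{i+1} < x_i, and if y_i < α/β then x_{i+1} > x_i. Moreover, for y_{i+1} = y_i(2γφx_{i+1} + 1)/(1 + γφx_{i+1} + δφ) with y_i > 0 and x_{i+1} ≥ 0: if x_{i+1} < δ/γ then y_{i+1} < y_i, and if x_{i+1} > δ/γ then y_{i+1} > y_i. (Hence the Mickens trajectories turn counterclockwise around (δ/γ, α/β), exactly as in the continuous system.) -/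
/-!
Both Mickens updates multiply the current density by a ratio of two positive affine expressions,
and the ratio exceeds one exactly when the corresponding right-hand side of the continuous
Lotka–Volterra system is positive: the difference of denominator and numerator is
`φ (β y - α)` for the prey and `φ (δ - γ x)` for the predator.
-/

section ScaledRatio

variable {u n d : ℝ}

theorem mul_div_lt_self_iff (hu : 0 < u) (hd : 0 < d) : u * n / d < u ↔ n < d := by
  rw [mul_div_assoc, mul_lt_iff_lt_one_right hu, div_lt_one hd]

theorem lt_mul_div_self_iff (hu : 0 < u) (hd : 0 < d) : u < u * n / d ↔ d < n := by
  rw [mul_div_assoc, lt_mul_iff_one_lt_right hu, one_lt_div hd]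

end ScaledRatio

section Mickens

variable {α β γ δ φ : ℝ}

noncomputable def mickensPrey (α β φ x y : ℝ) : ℝ := x * (2 * α * φ + 1) / (1 + α * φ + β * φ * y)

noncomputable def mickensPredator (γ δ φ x y : ℝ) : ℝ := y * (2 * γ * φ * x + 1) / (1 + γ * φ * x + δ * φ)

theorem mickensPrey_numerator_lt_iff (hβ : 0 < β) (hφ : 0 < φ) (y : ℝ) :
    2 * α * φ + 1 < 1 + α * φ + β * φ * y ↔ α / β < y := by
  rw [← sub_pos, show 1 + α * φ + β * φ * y - (2 * α * φ + 1) = φ * (β * y - α) by ring,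
    mul_pos_iff_of_pos_left hφ, sub_pos, div_lt_iff₀' hβ]

theorem mickensPrey_denominator_lt_iff (hβ : 0 < β) (hφ : 0 < φ) (y : ℝ) :
    1 + α * φ + β * φ * y < 2 * α * φ + 1 ↔ y < α / β := by
  rw [← sub_pos, show 2 * α * φ + 1 - (1 + α * φ + β * φ * y) = φ * (α - β * y) by ring,
    mul_pos_iff_of_pos_left hφ, sub_pos, lt_div_iff₀' hβ]

theorem mickensPredator_numerator_lt_iff (hγ : 0 < γ) (hφ : 0 < φ) (x : ℝ) :
    2 * γ * φ * x + 1 < 1 + γ * φ * x + δ * φ ↔ x < δ / γ := by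
  rw [← sub_pos, show 1 + γ * φ * x + δ * φ - (2 * γ * φ * x + 1) = φ * (δ - γ * x) by ring,
    mul_pos_iff_of_pos_left hφ, sub_pos, lt_div_iff₀' hγ]

theorem mickensPredator_denominator_lt_iff (hγ : 0 < γ) (hφ : 0 < φ) (x : ℝ) :
    1 + γ * φ * x + δ * φ < 2 * γ * φ * x + 1 ↔ δ / γ < x := by
  rw [← sub_pos, show 2 * γ * φ * x + 1 - (1 + γ * φ * x + δ * φ) = φ * (γ * x - δ) by ring,
    mul_pos_iff_of_pos_left hφ, sub_pos, div_lt_iff₀' hγ]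

variable {x y : ℝ}

theorem mickensPrey_denominator_pos (hα : 0 ≤ α) (hβ : 0 ≤ β) (hφ : 0 ≤ φ) (hy : 0 ≤ y) :
    0 < 1 + α * φ + β * φ * y := by
  positivity

theorem mickensPredator_denominator_pos (hγ : 0 ≤ γ) (hδ : 0 ≤ δ) (hφ : 0 ≤ φ) (hx : 0 ≤ x) :
    0 < 1 + γ * φ * x + δ * φ := by
  positivity

theorem mickensPrey_lt_self_iff (hα : 0 ≤ α) (hβ : 0 < β) (hφ : 0 < φ) (hx : 0 < x)
    (hy : 0 ≤ y) : mickensPrey α β φ x y < x ↔ α / β < y := by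
  rw [mickensPrey, mul_div_lt_self_iff hx (mickensPrey_denominator_pos hα hβ.le hφ.le hy),
    mickensPrey_numerator_lt_iff hβ hφ]

theorem lt_mickensPrey_self_iff (hα : 0 ≤ α) (hβ : 0 < β) (hφ : 0 < φ) (hx : 0 < x)
    (hy : 0 ≤ y) : x < mickensPrey α β φ x y ↔ y < α / β := by
  rw [mickensPrey, lt_mul_div_self_iff hx (mickensPrey_denominator_pos hα hβ.le hφ.le hy),
    mickensPrey_denominator_lt_iff hβ hφ]

theorem mickensPredator_lt_self_iff (hγ : 0 < γ) (hδ : 0 ≤ δ) (hφ : 0 < φ) (hx : 0 ≤ x)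
    (hy : 0 < y) : mickensPredator γ δ φ x y < y ↔ x < δ / γ := by
  rw [mickensPredator,
    mul_div_lt_self_iff hy (mickensPredator_denominator_pos hγ.le hδ hφ.le hx),
    mickensPredator_numerator_lt_iff hγ hφ]

theorem lt_mickensPredator_self_iff (hγ : 0 < γ) (hδ : 0 ≤ δ) (hφ : 0 < φ) (hx : 0 ≤ x)
    (hy : 0 < y) : y < mickensPredator γ δ φ x y ↔ δ / γ < x := by
  rw [mickensPredator,
    lt_mul_div_self_iff hy (mickensPredator_denominator_pos hγ.le hδ hφ.le hx),
    mickensPredator_denominator_lt_iff hγ hφ]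

end Mickens

/-- Monotonicity of the Mickens trajectories: with `x_i > 0` the prey density
decreases when `y_i > α/β` and increases when `y_i < α/β`; with `y_i > 0` the
predator density decreases when `x_{i+1} < δ/γ` and increases when
`x_{i+1} > δ/γ`. Hence Mickens trajectories turn counterclockwise around
`(δ/γ, α/β)`, exactly as in the continuous system. -/
theorem mickens_trajectory_directions
    (α β γ δ φ : ℝ) (hα : 0 < α) (hβ : 0 < β) (hγ : 0 < γ) (hδ : 0 < δ)
    (hφ : 0 < φ) :
    (∀ xi yi : ℝ, 0 < xi → 0 ≤ yi →
      ((α / β < yi →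
          xi * (2 * α * φ + 1) / (1 + α * φ + β * φ * yi) < xi) ∧
       (yi < α / β →
          xi < xi * (2 * α * φ + 1) / (1 + α * φ + β * φ * yi)))) ∧
    (∀ xi1 yi : ℝ, 0 < yi → 0 ≤ xi1 →
      ((xi1 < δ / γ →
          yi * (2 * γ * φ * xi1 + 1) / (1 + γ * φ * xi1 + δ * φ) < yi) ∧
       (δ / γ < xi1 →
          yi < yi * (2 * γ * φ * xi1 + 1) / (1 + γ * φ * xi1 + δ * φ)))) :=
  ⟨fun _ _ hx hy => ⟨(mickensPrey_lt_self_iff hα.le hβ hφ hx hy).2,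
      (lt_mickensPrey_self_iff hα.le hβ hφ hx hy).2⟩,
    fun _ _ hy hx => ⟨(mickensPredator_lt_self_iff hγ hδ.le hφ hx hy).2,
      (lt_mickensPredator_self_iff hγ hδ.le hφ hx hy).2⟩⟩
end
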